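/- Let (P,⋆,≺) be a polynomial algebra of solvable type over an integral domain R. Then P is an integral domain: for f, g ∈ P nonzero, f ⋆ g ≠ 0. Moreover P satisfies the left Ore condition: for any nonzero f, g ∈ P there exist nonzero φ, ψ ∈ P with φ ⋆ f = ψ ⋆ g. -/

import Mathlib

/-!
Leading exponents are additive, `lexp (f ⋆ g) = lexp f + lexp g`: expanding `f ⋆ g` into
products of terms, the product of the two leading terms is the only one reaching
`lexp f + lexp g`, because the term order is compatible with addition. This gives the domain
property.

For the Ore condition suppose that `f` and `g` have no nonzero common left multiple. Then
`f, f ⋆ g, f ⋆ g², …` are left linearly independent, so no nonzero scalar multiple of `f ⋆ g^k`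
lies in the left ideal `L_k` generated by the earlier ones. Since the term order is a well-order,
cancelling leading terms shows that the set `E_k` of leading exponents of `L_k` must then grow
strictly with `k`. Each `E_k` is closed under adding exponents, so for `γ_k ∈ E_{k+1} \ E_k`
Dickson's lemma gives `i < j` with `γ_i ≤ γ_j` componentwise, whence `γ_j ∈ E_{i+1} ⊆ E_j`.
-/

/-- Polynomials in `n` variables over `R`, represented by their coefficient families
indexed by multi indices. -/
abbrev SPoly (R : Type) [CommRing R] (n : ℕ) := (Fin n → ℕ) →₀ R

/-- The leading exponent of a polynomial with respect to a term order (the maximal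
element of its support; `0` for the zero polynomial). -/
noncomputable def lexp {R : Type} [CommRing R] {n : ℕ} (ord : LinearOrder (Fin n → ℕ))
    (f : SPoly R n) : Fin n → ℕ :=
  (@Finset.max _ ord f.support).unbotD 0

/-- A polynomial algebra of solvable type `(P, ⋆, ≺)`: the `R`-module `R[x₁,…,xₙ]`
equipped with an associative unital multiplication `⋆` such that `r ⋆ f = r • f` for
scalars, and with respect to a term order `≺` (a monoid order) the leading exponent of
`x^μ ⋆ x^ν` is `μ + ν` and of `x^μ ⋆ r` (for `r ≠ 0`) is `μ`. -/
structure SolvMul (R : Type) [CommRing R] (n : ℕ) (ord : LinearOrder (Fin n → ℕ)) where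
  star : SPoly R n → SPoly R n → SPoly R n
  zero_min : ∀ μ : Fin n → ℕ, ord.le 0 μ
  add_compat : ∀ μ ν σ : Fin n → ℕ, ord.lt μ ν → ord.lt (μ + σ) (ν + σ)
  star_assoc : ∀ f g h : SPoly R n, star (star f g) h = star f (star g h)
  star_add : ∀ f g h : SPoly R n, star f (g + h) = star f g + star f h
  add_star : ∀ f g h : SPoly R n, star (f + g) h = star f h + star g h
  one_star : ∀ f : SPoly R n, star (Finsupp.single 0 1) f = f
  star_one : ∀ f : SPoly R n, star f (Finsupp.single 0 1) = f
  scalar_star : ∀ (r : R) (f : SPoly R n), star (Finsupp.single 0 r) f = r • f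
  mono_mono : ∀ μ ν : Fin n → ℕ,
    star (Finsupp.single μ 1) (Finsupp.single ν 1) ≠ 0 ∧
      lexp ord (star (Finsupp.single μ 1) (Finsupp.single ν 1)) = μ + ν
  mono_scalar : ∀ (μ : Fin n → ℕ) (r : R), r ≠ 0 →
    star (Finsupp.single μ 1) (Finsupp.single 0 r) ≠ 0 ∧
      lexp ord (star (Finsupp.single μ 1) (Finsupp.single 0 r)) = μ

open Finset Finsupp

variable {R : Type} [CommRing R] {n : ℕ} {ord : LinearOrder (Fin n → ℕ)}

section LeadingExponent

theorem lexp_mem_support {f : SPoly R n} (hf : f ≠ 0) : lexp ord f ∈ f.support := by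
  have hs : f.support.Nonempty := Finsupp.support_nonempty_iff.mpr hf
  rw [lexp, ← @Finset.coe_max' _ ord _ hs, WithBot.unbotD_coe]
  exact @Finset.max'_mem _ ord _ hs

theorem le_lexp {f : SPoly R n} {μ : Fin n → ℕ} (hμ : μ ∈ f.support) :
    ord.le μ (lexp ord f) := by
  rw [lexp, ← @Finset.coe_max' _ ord _ ⟨μ, hμ⟩, WithBot.unbotD_coe]
  exact @Finset.le_max' _ ord _ μ hμ

theorem coeff_lexp_ne_zero {f : SPoly R n} (hf : f ≠ 0) : f (lexp ord f) ≠ 0 :=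
  Finsupp.mem_support_iff.mp (lexp_mem_support hf)

theorem lexp_eq_of_coeff_ne_zero {f : SPoly R n} {γ : Fin n → ℕ} (hγ : f γ ≠ 0)
    (hle : ∀ μ ∈ f.support, ord.le μ γ) : lexp ord f = γ :=
  have hf : f ≠ 0 := fun h => hγ (by rw [h, Finsupp.coe_zero, Pi.zero_apply])
  ord.le_antisymm _ _ (hle _ (lexp_mem_support hf)) (le_lexp (Finsupp.mem_support_iff.mpr hγ))

theorem lexp_lt_of_coeff_eq_zero {f : SPoly R n} {γ : Fin n → ℕ} (hf : f ≠ 0)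
    (hle : ∀ μ ∈ f.support, ord.le μ γ) (hγ : f γ = 0) : ord.lt (lexp ord f) γ :=
  @lt_of_le_of_ne _ ord.toPartialOrder _ _ (hle _ (lexp_mem_support hf))
    fun h => coeff_lexp_ne_zero hf (h ▸ hγ)

theorem lexp_single {σ : Fin n → ℕ} {c : R} (hc : c ≠ 0) : lexp ord (single σ c) = σ :=
  lexp_eq_of_coeff_ne_zero (by rwa [single_eq_same]) fun μ hμ =>
    (Finset.mem_singleton.mp (support_single_subset hμ)) ▸ ord.le_refl σ

theorem lexp_smul [IsDomain R] {r : R} (hr : r ≠ 0) (f : SPoly R n) :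
    lexp ord (r • f) = lexp ord f := by
  rw [lexp, lexp, Finsupp.support_smul_eq hr]

theorem sum_ne_zero_and_lexp_sum {ι : Type*} {s : Finset ι} {F : ι → SPoly R n} {i₀ : ι}
    (hi₀ : i₀ ∈ s) (hF₀ : F i₀ ≠ 0)
    (hlt : ∀ i ∈ s, i ≠ i₀ → ∀ μ ∈ (F i).support, ord.lt μ (lexp ord (F i₀))) :
    ∑ i ∈ s, F i ≠ 0 ∧ lexp ord (∑ i ∈ s, F i) = lexp ord (F i₀) := by
  set γ := lexp ord (F i₀)
  have hcoeff : (∑ i ∈ s, F i) γ = F i₀ γ := by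
    rw [Finsupp.finsetSum_apply]
    refine Finset.sum_eq_single_of_mem i₀ hi₀ fun i hi hne => ?_
    by_contra hγ
    exact (@lt_irrefl _ ord.toPreorder γ) (hlt i hi hne γ (Finsupp.mem_support_iff.mpr hγ))
  have hγ : (∑ i ∈ s, F i) γ ≠ 0 := hcoeff ▸ coeff_lexp_ne_zero hF₀
  refine ⟨fun h => hγ (by rw [h, Finsupp.coe_zero, Pi.zero_apply]),
    lexp_eq_of_coeff_ne_zero hγ fun μ hμ => ?_⟩
  obtain ⟨i, hi, hμi⟩ := Finset.mem_biUnion.mp (Finsupp.support_finsetSum hμ)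
  by_cases hne : i = i₀
  · subst hne
    exact le_lexp hμi
  · exact @le_of_lt _ ord.toPreorder _ _ (hlt i hi hne μ hμi)

def leadingExps (ord : LinearOrder (Fin n → ℕ)) (N : Set (SPoly R n)) : Set (Fin n → ℕ) :=
  lexp ord '' (N \ {0})

theorem leadingExps_mono {N N' : Set (SPoly R n)} (h : N ⊆ N') :
    leadingExps ord N ⊆ leadingExps ord N' :=
  Set.image_mono (Set.sdiff_subset_sdiff_left h)

theorem exists_smul_mem_of_leadingExps_subset [IsDomain R] (hwf : WellFounded ord.lt)
    {N N' : Submodule R (SPoly R n)} (hNN' : N ≤ N')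
    (hE : leadingExps ord (N' : Set (SPoly R n)) ⊆ leadingExps ord (N : Set (SPoly R n)))
    {w : SPoly R n} (hw : w ∈ N') :
    ∃ r : R, r ≠ 0 ∧ r • w ∈ N := by
  induction w using (InvImage.wf (lexp ord) hwf).induction with
  | _ w ih =>
  by_cases hw0 : w = 0
  · exact ⟨1, one_ne_zero, by rw [hw0, smul_zero]; exact N.zero_mem⟩
  obtain ⟨v, ⟨hvN, hv0⟩, hvw⟩ := hE ⟨w, ⟨hw, hw0⟩, rfl⟩
  set γ := lexp ord w with hγ
  have ha : v γ ≠ 0 := hvw ▸ coeff_lexp_ne_zero hv0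
  -- the leading terms cancel in `w'`
  set w' := v γ • w - w γ • v
  have hw' : w' ∈ N' := N'.sub_mem (N'.smul_mem _ hw) (N'.smul_mem _ (hNN' hvN))
  obtain ⟨r, hr, hrw'⟩ : ∃ r : R, r ≠ 0 ∧ r • w' ∈ N := by
    by_cases hw'0 : w' = 0
    · exact ⟨1, one_ne_zero, by rw [hw'0, smul_zero]; exact N.zero_mem⟩
    refine ih w' (lexp_lt_of_coeff_eq_zero hw'0 (fun μ hμ => ?_) ?_) hw'
    · rcases Finset.mem_union.mp (support_sub hμ) with hμ | hμ
      · exact le_lexp (support_smul hμ)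
      · rw [← hγ, ← hvw]
        exact le_lexp (support_smul hμ)
    · simp only [w', Finsupp.coe_sub, Finsupp.coe_smul, Pi.sub_apply, Pi.smul_apply, smul_eq_mul]
      ring
  refine ⟨r * v γ, mul_ne_zero hr ha, ?_⟩
  have hdecomp : (r * v γ) • w = r • w' + (r * w γ) • v := by
    simp only [w', smul_sub, smul_smul, sub_add_cancel]
  rw [hdecomp]
  exact N.add_mem hrw' (N.smul_mem _ hvN)

end LeadingExponent

namespace SolvMul

section TermOrder

theorem add_le_add_right (A : SolvMul R n ord) {μ ν : Fin n → ℕ} (h : ord.le μ ν)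
    (σ : Fin n → ℕ) :
    ord.le (μ + σ) (ν + σ) := by
  rcases @eq_or_lt_of_le _ ord.toPartialOrder _ _ h with rfl | hlt
  · exact ord.le_refl _
  · exact @le_of_lt _ ord.toPreorder _ _ (A.add_compat μ ν σ hlt)

theorem add_lt_add_left (A : SolvMul R n ord) {μ ν : Fin n → ℕ} (h : ord.lt μ ν)
    (σ : Fin n → ℕ) :
    ord.lt (σ + μ) (σ + ν) := by
  rw [add_comm σ, add_comm σ]
  exact A.add_compat μ ν σ h

theorem add_lt_add_of_le_of_le_of_ne (A : SolvMul R n ord) {σ τ d e : Fin n → ℕ}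
    (hσ : ord.le σ d) (hτ : ord.le τ e) (hne : (σ, τ) ≠ (d, e)) : ord.lt (σ + τ) (d + e) := by
  rcases @eq_or_lt_of_le _ ord.toPartialOrder _ _ hσ with rfl | hσ
  · have hτ : ord.lt τ e :=
      @lt_of_le_of_ne _ ord.toPartialOrder _ _ hτ fun h => hne (h ▸ rfl)
    exact A.add_lt_add_left hτ σ
  · exact @lt_of_lt_of_le _ ord.toPreorder _ _ _ (A.add_compat σ d τ hσ)
      (by rw [add_comm d τ, add_comm d e]; exact A.add_le_add_right hτ d)

theorem le_of_pi_le (A : SolvMul R n ord) {μ ν : Fin n → ℕ} (h : μ ≤ ν) : ord.le μ ν := by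
  have := A.add_le_add_right (A.zero_min (ν - μ)) μ
  rwa [zero_add, tsub_add_cancel_of_le h] at this

theorem wellFounded_lt (A : SolvMul R n ord) : WellFounded ord.lt := by
  have hwqo : WellQuasiOrdered ord.le := fun Γ =>
    let ⟨i, j, hij, hle⟩ := wellQuasiOrdered_le Γ
    ⟨i, j, hij, A.le_of_pi_le hle⟩
  exact Subrelation.wf (fun h => (ord.lt_iff_le_not_ge _ _).mp h) hwqo.wellFounded

end TermOrder

variable (A : SolvMul R n ord)

section Bilinearity

@[simps]
def starRight (g : SPoly R n) : SPoly R n →ₗ[R] SPoly R n where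
  toFun φ := A.star φ g
  map_add' φ ψ := A.add_star φ ψ g
  map_smul' r φ := by
    rw [RingHom.id_apply, ← A.scalar_star, A.star_assoc, A.scalar_star]

noncomputable def starLeft (f : SPoly R n) : SPoly R n →+ SPoly R n :=
  AddMonoidHom.mk' (A.star f) (A.star_add f)

theorem zero_star (g : SPoly R n) : A.star 0 g = 0 :=
  map_zero (A.starRight g)

theorem smul_star (r : R) (f g : SPoly R n) : A.star (r • f) g = r • A.star f g :=
  map_smul (A.starRight g) r f

theorem sub_star (f f' g : SPoly R n) : A.star (f - f') g = A.star f g - A.star f' g :=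
  map_sub (A.starRight g) f f'

theorem sum_star {ι : Type*} (s : Finset ι) (φ : ι → SPoly R n) (g : SPoly R n) :
    A.star (∑ i ∈ s, φ i) g = ∑ i ∈ s, A.star (φ i) g :=
  map_sum (A.starRight g) φ s

theorem star_sum {ι : Type*} (s : Finset ι) (f : SPoly R n) (φ : ι → SPoly R n) :
    A.star f (∑ i ∈ s, φ i) = ∑ i ∈ s, A.star f (φ i) :=
  map_sum (A.starLeft f) φ s

theorem star_eq_sum_smul (f g : SPoly R n) :
    A.star f g = ∑ σ ∈ f.support, f σ • A.star (single σ 1) g := by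
  conv_lhs => rw [← f.sum_single]
  simp only [Finsupp.sum, sum_star, ← smul_star, smul_single_one]

theorem star_eq_sum_single_star_single (f g : SPoly R n) :
    A.star f g =
      ∑ p ∈ f.support ×ˢ g.support, A.star (single p.1 (f p.1)) (single p.2 (g p.2)) := by
  conv_lhs => rw [← f.sum_single, ← g.sum_single]
  rw [Finset.sum_product, Finsupp.sum, sum_star]
  simp only [Finsupp.sum, star_sum]

end Bilinearity

section Domain

variable [IsDomain R]

theorem star_single_one_ne_zero_and_lexp {p : SPoly R n} (hp : p ≠ 0) (τ : Fin n → ℕ) :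
    A.star p (single τ 1) ≠ 0 ∧ lexp ord (A.star p (single τ 1)) = lexp ord p + τ := by
  set F : (Fin n → ℕ) → SPoly R n := fun ρ => p ρ • A.star (single ρ 1) (single τ 1)
  have hF₀ : F (lexp ord p) ≠ 0 := smul_ne_zero (coeff_lexp_ne_zero hp) (A.mono_mono _ τ).1
  have hlexp₀ : lexp ord (F (lexp ord p)) = lexp ord p + τ := by
    rw [lexp_smul (coeff_lexp_ne_zero hp), (A.mono_mono _ τ).2]
  have hlt : ∀ ρ ∈ p.support, ρ ≠ lexp ord p → ∀ μ ∈ (F ρ).support,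
      ord.lt μ (lexp ord (F (lexp ord p))) := by
    intro ρ hρ hne μ hμ
    have hμρ : ord.le μ (ρ + τ) := (A.mono_mono ρ τ).2 ▸ le_lexp (support_smul hμ)
    have hρ' : ord.lt ρ (lexp ord p) := @lt_of_le_of_ne _ ord.toPartialOrder _ _ (le_lexp hρ) hne
    rw [hlexp₀]
    exact @lt_of_le_of_lt _ ord.toPreorder _ _ _ hμρ (A.add_compat _ _ τ hρ')
  obtain ⟨hne, hlexp⟩ := sum_ne_zero_and_lexp_sum (lexp_mem_support hp) hF₀ hlt
  rw [A.star_eq_sum_smul]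
  exact ⟨hne, hlexp.trans hlexp₀⟩

theorem single_star_single_ne_zero_and_lexp {σ τ : Fin n → ℕ} {c d : R} (hc : c ≠ 0)
    (hd : d ≠ 0) :
    A.star (single σ c) (single τ d) ≠ 0 ∧
      lexp ord (A.star (single σ c) (single τ d)) = σ + τ := by
  obtain ⟨hp, hlexp_p⟩ := A.mono_scalar σ d hd
  have hfactor : A.star (single σ c) (single τ d) =
      c • A.star (A.star (single σ 1) (single 0 d)) (single τ 1) := by
    rw [A.star_assoc, A.scalar_star, smul_single_one, ← A.smul_star, smul_single_one]
  obtain ⟨hne, hlexp⟩ := A.star_single_one_ne_zero_and_lexp hp τ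
  rw [hfactor, lexp_smul hc, hlexp, hlexp_p]
  exact ⟨smul_ne_zero hc hne, rfl⟩

theorem star_ne_zero_and_lexp {f g : SPoly R n} (hf : f ≠ 0) (hg : g ≠ 0) :
    A.star f g ≠ 0 ∧ lexp ord (A.star f g) = lexp ord f + lexp ord g := by
  set T : (Fin n → ℕ) × (Fin n → ℕ) → SPoly R n :=
    fun p => A.star (single p.1 (f p.1)) (single p.2 (g p.2))
  have hT : ∀ p ∈ f.support ×ˢ g.support, T p ≠ 0 ∧ lexp ord (T p) = p.1 + p.2 := by
    intro p hp
    obtain ⟨hσ, hτ⟩ := Finset.mem_product.mp hp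
    exact A.single_star_single_ne_zero_and_lexp (Finsupp.mem_support_iff.mp hσ)
      (Finsupp.mem_support_iff.mp hτ)
  have hmem : (lexp ord f, lexp ord g) ∈ f.support ×ˢ g.support :=
    Finset.mem_product.mpr ⟨lexp_mem_support hf, lexp_mem_support hg⟩
  have hlt : ∀ p ∈ f.support ×ˢ g.support, p ≠ (lexp ord f, lexp ord g) →
      ∀ μ ∈ (T p).support, ord.lt μ (lexp ord (T (lexp ord f, lexp ord g))) := by
    intro p hp hne μ hμ
    obtain ⟨hσ, hτ⟩ := Finset.mem_product.mp hp
    have hμp : ord.le μ (p.1 + p.2) := (hT p hp).2 ▸ le_lexp hμ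
    rw [(hT _ hmem).2]
    exact @lt_of_le_of_lt _ ord.toPreorder _ _ _ hμp
      (A.add_lt_add_of_le_of_le_of_ne (le_lexp hσ) (le_lexp hτ) hne)
  obtain ⟨hne, hlexp⟩ := sum_ne_zero_and_lexp_sum hmem (hT _ hmem).1 hlt
  rw [A.star_eq_sum_single_star_single]
  exact ⟨hne, hlexp.trans (hT _ hmem).2⟩

theorem star_ne_zero {f g : SPoly R n} (hf : f ≠ 0) (hg : g ≠ 0) : A.star f g ≠ 0 :=
  (A.star_ne_zero_and_lexp hf hg).1

theorem lexp_star {f g : SPoly R n} (hf : f ≠ 0) (hg : g ≠ 0) :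
    lexp ord (A.star f g) = lexp ord f + lexp ord g :=
  (A.star_ne_zero_and_lexp hf hg).2

theorem star_left_injective {g : SPoly R n} (hg : g ≠ 0) : Function.Injective (A.star · g) := by
  intro f f' h
  by_contra hne
  exact A.star_ne_zero (sub_ne_zero.mpr hne) hg (by rw [A.sub_star, sub_eq_zero.mpr h])

end Domain

section LeftSpan

noncomputable def leftSpan (h : ℕ → SPoly R n) (k : ℕ) : Submodule R (SPoly R n) :=
  LinearMap.range (∑ i ∈ range k, (A.starRight (h i)).comp (LinearMap.proj i))

variable {A}

theorem mem_leftSpan {h : ℕ → SPoly R n} {k : ℕ} {w : SPoly R n} :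
    w ∈ A.leftSpan h k ↔ ∃ c : ℕ → SPoly R n, ∑ i ∈ range k, A.star (c i) (h i) = w := by
  simp [leftSpan, LinearMap.mem_range]

theorem star_mem_leftSpan {h : ℕ → SPoly R n} {k : ℕ} (φ : SPoly R n) {w : SPoly R n}
    (hw : w ∈ A.leftSpan h k) : A.star φ w ∈ A.leftSpan h k := by
  obtain ⟨c, rfl⟩ := mem_leftSpan.mp hw
  exact mem_leftSpan.mpr ⟨fun i => A.star φ (c i), by simp only [A.star_sum, A.star_assoc]⟩

theorem leftSpan_mono (h : ℕ → SPoly R n) : Monotone (A.leftSpan h) := by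
  intro k k' hkk' w hw
  obtain ⟨c, rfl⟩ := mem_leftSpan.mp hw
  refine mem_leftSpan.mpr ⟨fun i => if i < k then c i else 0, ?_⟩
  rw [← Finset.sum_subset (range_subset_range.mpr hkk') fun i _ hi => by
    simp only [mem_range] at hi
    simp only [if_neg hi, A.zero_star]]
  exact Finset.sum_congr rfl fun i hi => by simp only [if_pos (mem_range.mp hi)]

theorem mem_leftSpan_of_lt (h : ℕ → SPoly R n) {i k : ℕ} (hi : i < k) :
    h i ∈ A.leftSpan h k := by
  refine mem_leftSpan.mpr ⟨fun j => if j = i then single 0 1 else 0, ?_⟩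
  rw [Finset.sum_eq_single_of_mem i (mem_range.mpr hi) fun j _ hj => by
    simp only [if_neg hj, A.zero_star]]
  simp only [↓reduceIte, A.one_star]

end LeftSpan

def starPow (f g : SPoly R n) : ℕ → SPoly R n
  | 0 => f
  | k + 1 => A.star (starPow f g k) g

theorem starPow_zero (f g : SPoly R n) : A.starPow f g 0 = f := rfl

theorem starPow_succ (f g : SPoly R n) (k : ℕ) :
    A.starPow f g (k + 1) = A.star (A.starPow f g k) g := rfl

section Ore

variable [IsDomain R] {f g : SPoly R n}

theorem add_mem_leadingExps {N : Set (SPoly R n)} (hN : ∀ φ, ∀ w ∈ N, A.star φ w ∈ N)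
    {γ : Fin n → ℕ} (hγ : γ ∈ leadingExps ord N) (σ : Fin n → ℕ) :
    σ + γ ∈ leadingExps ord N := by
  obtain ⟨w, ⟨hwN, hw0⟩, rfl⟩ := hγ
  have hσ : (single σ 1 : SPoly R n) ≠ 0 := single_ne_zero.mpr one_ne_zero
  refine ⟨A.star (single σ 1) w, ⟨hN _ w hwN, A.star_ne_zero hσ hw0⟩, ?_⟩
  rw [A.lexp_star hσ hw0, lexp_single one_ne_zero]

theorem eq_zero_of_star_starPow_mem_leftSpan
    (H : ∀ φ ψ : SPoly R n, A.star φ f = A.star ψ g → φ = 0) (hg : g ≠ 0) {k : ℕ}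
    {φ : SPoly R n} (hφ : A.star φ (A.starPow f g k) ∈ A.leftSpan (A.starPow f g) k) :
    φ = 0 := by
  induction k generalizing φ with
  | zero =>
    obtain ⟨c, hc⟩ := mem_leftSpan.mp hφ
    rw [Finset.sum_range_zero, ← A.zero_star g] at hc
    exact H φ 0 hc.symm
  | succ k ih =>
    obtain ⟨c, hc⟩ := mem_leftSpan.mp hφ
    set Ψ := ∑ i ∈ range k, A.star (c (i + 1)) (A.starPow f g i)
    have hshift :
        ∑ i ∈ range k, A.star (c (i + 1)) (A.starPow f g (i + 1)) = A.star Ψ g := by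
      simp only [Ψ, A.sum_star, A.star_assoc, starPow_succ]
    rw [Finset.sum_range_succ', hshift, starPow_succ, ← A.star_assoc] at hc
    have hc₀ : A.star (c 0) f = A.star (A.star φ (A.starPow f g k) - Ψ) g := by
      rw [A.sub_star, ← hc, add_sub_cancel_left, starPow_zero]
    rw [H _ _ hc₀, A.zero_star, add_zero] at hc
    exact ih (A.star_left_injective hg hc ▸ mem_leftSpan.mpr ⟨fun i => c (i + 1), rfl⟩)

theorem exists_mem_leadingExps_succ_not_mem
    (H : ∀ φ ψ : SPoly R n, A.star φ f = A.star ψ g → φ = 0) (hg : g ≠ 0) (k : ℕ) :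
    ∃ γ ∈ leadingExps ord (A.leftSpan (A.starPow f g) (k + 1) : Set (SPoly R n)),
      γ ∉ leadingExps ord (A.leftSpan (A.starPow f g) k : Set (SPoly R n)) := by
  by_contra! hE
  obtain ⟨r, hr, hrP⟩ := exists_smul_mem_of_leadingExps_subset A.wellFounded_lt
    (A.leftSpan_mono _ k.le_succ) hE (mem_leftSpan_of_lt _ k.lt_succ_self)
  rw [← A.scalar_star] at hrP
  exact hr (single_eq_zero.mp (A.eq_zero_of_star_starPow_mem_leftSpan H hg hrP))

theorem exists_ne_zero_star_eq_star (hf : f ≠ 0) (hg : g ≠ 0) :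
    ∃ φ ψ : SPoly R n, φ ≠ 0 ∧ ψ ≠ 0 ∧ A.star φ f = A.star ψ g := by
  by_contra! hcon
  have H : ∀ φ ψ : SPoly R n, A.star φ f = A.star ψ g → φ = 0 := by
    intro φ ψ h
    by_contra hφ
    have hψ : ψ ≠ 0 := by
      rintro rfl
      exact A.star_ne_zero hφ hf (h.trans (A.zero_star g))
    exact hcon φ ψ hφ hψ h
  choose Γ hΓ hΓ' using A.exists_mem_leadingExps_succ_not_mem H hg
  obtain ⟨i, j, hij, hle⟩ := wellQuasiOrdered_le Γ
  apply hΓ' j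
  rw [← tsub_add_cancel_of_le hle]
  exact leadingExps_mono (A.leftSpan_mono _ hij)
    (A.add_mem_leadingExps (fun φ _ hw => star_mem_leftSpan φ hw) (hΓ i) _)

end Ore

end SolvMul

/-- A polynomial algebra of solvable type over an integral domain is an integral
domain (`f ⋆ g ≠ 0` for nonzero `f, g`) and a left Ore domain: for any nonzero
`f, g` there exist nonzero `φ, ψ` with `φ ⋆ f = ψ ⋆ g`. -/
theorem stmt13 {R : Type} [CommRing R] [IsDomain R] {n : ℕ}
    (ord : LinearOrder (Fin n → ℕ)) (A : SolvMul R n ord) :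
    (∀ f g : SPoly R n, f ≠ 0 → g ≠ 0 → A.star f g ≠ 0) ∧
    (∀ f g : SPoly R n, f ≠ 0 → g ≠ 0 →
      ∃ φ ψ : SPoly R n, φ ≠ 0 ∧ ψ ≠ 0 ∧ A.star φ f = A.star ψ g) :=
  ⟨fun _ _ hf hg => A.star_ne_zero hf hg, fun _ _ hf hg => A.exists_ne_zero_star_eq_star hf hg⟩
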